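/- arXiv:1105.2840 — 5 statements merged into one kernel-verified Lean document; each statement's English description precedes it below -/
import Mathlib

section
/- (Proposition 5.1(i), second part) If Ψ satisfies condition (⋆) and η ≤_Ψ μ ≤_Ψ ν in E, then d_Ψ(η,μ) + d_Ψ(μ,ν) = d_Ψ(η,ν). -/
/-!
Under (⋆) all representations `ν - μ = ∑_{α ∈ Ψ} m_α α` have the same total `∑ m_α`: applying (⋆)
to two of them, the second extended by zero from `Ψ` to `W`, bounds each total by the other.
So `d_Ψ(μ, ν)` is the total of any representation, and adding a representation of `μ - η` to one
of `ν - μ` gives one of `ν - η`.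
-/

open Finset

/-- Condition (⋆) for a subset `Ψ` of the finite set of weights `W`. -/
def StarCond {E : Type*} [AddCommGroup E] (W Ψ : Finset E) : Prop :=
  ∀ m r : E → ℕ,
    (∑ α ∈ Ψ, m α • α) = (∑ β ∈ W, r β • β) →
      ((∑ α ∈ Ψ, m α) ≤ (∑ β ∈ W, r β) ∧
        ((∑ α ∈ Ψ, m α) = (∑ β ∈ W, r β) → ∀ β ∈ W, 0 < r β → β ∈ Ψ))

/-- `μ ≤_Ψ ν` iff `ν - μ` is a `ℤ≥0`-linear combination of elements of `Ψ`. -/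
def lePsi {E : Type*} [AddCommGroup E] (Ψ : Finset E) (μ ν : E) : Prop :=
  ∃ m : E → ℕ, ν - μ = ∑ α ∈ Ψ, m α • α

/-- `d_Ψ(μ,ν)`: the minimum total `∑ m_α` over representations
`ν - μ = ∑_{α ∈ Ψ} m_α • α` with `m_α ∈ ℤ≥0`. -/
noncomputable def dPsi {E : Type*} [AddCommGroup E] (Ψ : Finset E) (μ ν : E) : ℕ :=
  sInf {n : ℕ | ∃ m : E → ℕ, (ν - μ = ∑ α ∈ Ψ, m α • α) ∧ n = ∑ α ∈ Ψ, m α}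

namespace StarCond

variable {E : Type*} [AddCommGroup E] {W Ψ : Finset E}

lemma sum_le_sum_of_sum_smul_eq (hstar : StarCond W Ψ) (hΨW : Ψ ⊆ W) {a b : E → ℕ}
    (h : ∑ α ∈ Ψ, a α • α = ∑ α ∈ Ψ, b α • α) : ∑ α ∈ Ψ, a α ≤ ∑ α ∈ Ψ, b α := by
  classical
  have hWΨ : W ∩ Ψ = Ψ := inter_eq_right.mpr hΨW
  have hsmul : ∑ β ∈ W, (if β ∈ Ψ then b β else 0) • β = ∑ α ∈ Ψ, b α • α := by
    simp only [ite_smul, zero_smul, sum_ite_mem, hWΨ]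
  have hsum : ∑ β ∈ W, (if β ∈ Ψ then b β else 0) = ∑ α ∈ Ψ, b α := by
    rw [sum_ite_mem, hWΨ]
  simpa only [hsum] using (hstar a _ (h.trans hsmul.symm)).1

lemma sum_eq_sum_of_sum_smul_eq (hstar : StarCond W Ψ) (hΨW : Ψ ⊆ W) {a b : E → ℕ}
    (h : ∑ α ∈ Ψ, a α • α = ∑ α ∈ Ψ, b α • α) : ∑ α ∈ Ψ, a α = ∑ α ∈ Ψ, b α :=
  (hstar.sum_le_sum_of_sum_smul_eq hΨW h).antisymm (hstar.sum_le_sum_of_sum_smul_eq hΨW h.symm)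

lemma dPsi_eq_sum (hstar : StarCond W Ψ) (hΨW : Ψ ⊆ W) {μ ν : E} {m : E → ℕ}
    (hm : ν - μ = ∑ α ∈ Ψ, m α • α) : dPsi Ψ μ ν = ∑ α ∈ Ψ, m α := by
  obtain ⟨m', hm', hsum⟩ := Nat.sInf_mem (⟨_, m, hm, rfl⟩ :
    {n : ℕ | ∃ m : E → ℕ, (ν - μ = ∑ α ∈ Ψ, m α • α) ∧ n = ∑ α ∈ Ψ, m α}.Nonempty)
  rw [dPsi, hsum]
  exact hstar.sum_eq_sum_of_sum_smul_eq hΨW (hm'.symm.trans hm)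

end StarCond

theorem dPsi_additive_general
    (E : Type*) [AddCommGroup E]
    (W Ψ : Finset E) (hΨW : Ψ ⊆ W)
    (hstar : StarCond W Ψ)
    (η μ ν : E) (h₁ : lePsi Ψ η μ) (h₂ : lePsi Ψ μ ν) :
    dPsi Ψ η μ + dPsi Ψ μ ν = dPsi Ψ η ν := by
  obtain ⟨a, ha⟩ := h₁
  obtain ⟨b, hb⟩ := h₂
  have hab : ν - η = ∑ α ∈ Ψ, (a + b) α • α := by
    simp only [Pi.add_apply, add_smul, sum_add_distrib, ← ha, ← hb]
    abel
  rw [hstar.dPsi_eq_sum hΨW ha, hstar.dPsi_eq_sum hΨW hb, hstar.dPsi_eq_sum hΨW hab,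
    ← sum_add_distrib]
  rfl

theorem dPsi_additive
    (E : Type*) [AddCommGroup E] [Module ℂ E] [FiniteDimensional ℂ E]
    (W Ψ : Finset E) (hΨW : Ψ ⊆ W) (hne : Ψ.Nonempty)
    (hstar : StarCond W Ψ)
    (η μ ν : E) (h₁ : lePsi Ψ η μ) (h₂ : lePsi Ψ μ ν) :
    dPsi Ψ η μ + dPsi Ψ μ ν = dPsi Ψ η ν :=
  dPsi_additive_general E W Ψ hΨW hstar η μ ν h₁ h₂
end

section
/- (interval-finiteness, asserted in the abstract) For all (λ,r) ⪯ (μ,s) in Λ = E × ℤ, the interval {(η,t) ∈ Λ : (λ,r) ⪯ (η,t) ⪯ (μ,s)} is a finite set; that is, (Λ, ⪯) is an interval-finite poset. -/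
open Finset

/-- The covering relation on `Λ = E × ℤ`: `(μ, s)` covers `(λ, r)` iff `s > r`
and `μ - λ` lies in `W (s - r)`.  Here `covers W x y` means `y` covers `x`. -/
def covers {E : Type*} [AddCommGroup E] (W : ℤ → Finset E) (x y : E × ℤ) : Prop :=
  x.2 < y.2 ∧ y.1 - x.1 ∈ W (y.2 - x.2)

/-!
Every cover strictly raises the `ℤ`-coordinate, and each point has only finitely many covers
below any given height, because there are finitely many possible jumps `k` and each `W k` is
finite. For a relation graded in this way, the points reachable from `x` below height `H` form a
finite set, by induction on `H`: such a point is `x` itself or covers a reachable point of smaller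
height. An interval `[x, y]` lies below height `y.2 + 1`.
-/

namespace Relation

variable {α : Type*} {r : α → α → Prop} {f : α → ℤ}

theorem ReflTransGen.le_of_forall_rel_lt (hf : ∀ a b, r a b → f a < f b) {a b : α}
    (h : ReflTransGen r a b) : f a ≤ f b := by
  induction h with
  | refl => exact le_rfl
  | tail _ hbc ih => exact ih.trans (hf _ _ hbc).le

theorem finite_setOf_reflTransGen_lt (hf : ∀ a b, r a b → f a < f b)
    (hfin : ∀ a H, {b | r a b ∧ f b < H}.Finite) (x : α) (H : ℤ) :
    {z | ReflTransGen r x z ∧ f z < H}.Finite := by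
  suffices key : ∀ n : ℕ, {z | ReflTransGen r x z ∧ f z < f x + n}.Finite from
    (key (H - f x).toNat).subset fun z ⟨hxz, hz⟩ => ⟨hxz, by omega⟩
  intro n
  induction n with
  | zero =>
    convert Set.finite_empty
    ext z
    simpa using fun hxz => ReflTransGen.le_of_forall_rel_lt hf hxz
  | succ n ih =>
    refine ((ih.biUnion fun w _ => hfin w (f x + (n + 1))).insert x).subset ?_
    rintro z ⟨hxz, hz⟩
    rcases hxz.cases_tail with rfl | ⟨w, hxw, hwz⟩
    · exact Set.mem_insert _ _
    · have hw : f w < f x + n := by push_cast at hz; linarith [hf _ _ hwz]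
      exact Set.mem_insert_of_mem _ (Set.mem_biUnion ⟨hxw, hw⟩ ⟨hwz, hz⟩)

end Relation

theorem finite_setOf_covers_snd_lt {E : Type*} [AddCommGroup E] (W : ℤ → Finset E)
    (a : E × ℤ) (H : ℤ) : {b | covers W a b ∧ b.2 < H}.Finite := by
  refine ((Set.finite_Ioo a.2 H).biUnion fun t _ =>
    ((W (t - a.2)).finite_toSet.image fun e => (a.1 + e, t))).subset ?_
  rintro ⟨μ, s⟩ ⟨⟨hs, hμ⟩, hsH⟩
  exact Set.mem_biUnion (x := s) ⟨hs, hsH⟩ ⟨μ - a.1, hμ, by simp⟩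

theorem preceq_interval_finite_general
    (E : Type*) [AddCommGroup E]
    (W : ℤ → Finset E) (x y : E × ℤ) :
    {z : E × ℤ | Relation.ReflTransGen (covers W) x z ∧
      Relation.ReflTransGen (covers W) z y}.Finite := by
  have hgraded : ∀ a b, covers W a b → a.2 < b.2 := fun _ _ h => h.1
  refine (Relation.finite_setOf_reflTransGen_lt hgraded (finite_setOf_covers_snd_lt W) x
    (y.2 + 1)).subset fun z ⟨hxz, hzy⟩ => ⟨hxz, ?_⟩
  exact Int.lt_add_one_of_le (hzy.le_of_forall_rel_lt hgraded)

/-- `(Λ, ⪯)` is an interval-finite poset, where `⪯` is the reflexive-transitive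
closure of the covering relation. -/
theorem preceq_interval_finite
    (E : Type*) [AddCommGroup E] [Module ℂ E] [FiniteDimensional ℂ E]
    (W : ℤ → Finset E) (x y : E × ℤ)
    (hxy : Relation.ReflTransGen (covers W) x y) :
    {z : E × ℤ | Relation.ReflTransGen (covers W) x z ∧
      Relation.ReflTransGen (covers W) z y}.Finite :=
  preceq_interval_finite_general E W x y
end

section
/- (Proposition 5.1(ii), first part) If Ψ satisfies condition (⋆), then ⪯_Ψ is a partial order on Λ = E × ℤ which refines ⪯: whenever (λ,r) ⪯_Ψ (μ,s), one also has (λ,r) ⪯ (μ,s). -/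
open Finset

/-- The partial order `⪯` on `Λ = E × ℤ`: `(λ,r) ⪯ (μ,s)` iff `(λ,r) = (μ,s)`,
or `s > r` and `μ - λ` is a sum of `s - r` elements of `W` (with repetition). -/
def preceq {E : Type*} [AddCommGroup E] (W : Finset E) (x y : E × ℤ) : Prop :=
  x = y ∨ (x.2 < y.2 ∧
    ∃ ξ : Fin (y.2 - x.2).toNat → E, (∀ i, ξ i ∈ W) ∧ y.1 - x.1 = ∑ i, ξ i)

/-- The refined order `⪯_Ψ` on `Λ = E × ℤ`: `(λ,r) ⪯_Ψ (μ,s)` iff `λ ≤_Ψ μ`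
and `d_Ψ(λ,μ) = s - r`. -/
noncomputable def preceqPsi {E : Type*} [AddCommGroup E] (Ψ : Finset E)
    (x y : E × ℤ) : Prop :=
  lePsi Ψ x.1 y.1 ∧ (dPsi Ψ x.1 y.1 : ℤ) = y.2 - x.2

/-!
Under (⋆) applied with `r` supported on `Ψ`, any two representations
`ν - μ = ∑_{α ∈ Ψ} m_α α` have the same total `∑ m_α`, so `d_Ψ(μ, ν)` is the total of any
representation. Hence `d_Ψ` is additive along `≤_Ψ`, which gives transitivity; `d_Ψ = 0`
forces `μ = ν`, which gives antisymmetry; and a representation of total `s - r` spells out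
`ν - μ` as a sum of `s - r` elements of `Ψ ⊆ W`, which gives the refinement.
-/

lemma Multiset.exists_fin_sum_eq {E : Type*} [AddCommMonoid E] (M : Multiset E) {n : ℕ}
    (hn : Multiset.card M = n) : ∃ ξ : Fin n → E, (∀ i, ξ i ∈ M) ∧ ∑ i, ξ i = M.sum := by
  induction M using Quot.ind with
  | mk l =>
    subst hn
    exact ⟨fun i => l[i.1], fun i => List.getElem_mem _, Fin.sum_univ_getElem l⟩

lemma Finset.exists_fin_sum_eq_sum_nsmul {E : Type*} [AddCommMonoid E] (Ψ : Finset E)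
    (m : E → ℕ) :
    ∃ ξ : Fin (∑ α ∈ Ψ, m α) → E, (∀ i, ξ i ∈ Ψ) ∧ ∑ i, ξ i = ∑ α ∈ Ψ, m α • α := by
  obtain ⟨ξ, hξΨ, hξ⟩ := (∑ α ∈ Ψ, Multiset.replicate (m α) α).exists_fin_sum_eq
    (n := ∑ α ∈ Ψ, m α) (by simp only [Multiset.card_sum, Multiset.card_replicate])
  refine ⟨ξ, fun i => ?_, by simpa only [Multiset.sum_sum, Multiset.sum_replicate] using hξ⟩
  obtain ⟨α, hα, hξα⟩ := Multiset.mem_sum.1 (hξΨ i)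
  rwa [Multiset.eq_of_mem_replicate hξα]

section

variable {E : Type*} [AddCommGroup E] {W Ψ : Finset E}

lemma lePsi_refl (μ : E) : lePsi Ψ μ μ := ⟨0, by simp⟩

lemma dPsi_self (μ : E) : dPsi Ψ μ μ = 0 :=
  Nat.sInf_eq_zero.2 (.inl ⟨0, by simp⟩)

lemma eq_of_lePsi_of_dPsi_eq_zero {μ ν : E} (h : lePsi Ψ μ ν) (hd : dPsi Ψ μ ν = 0) :
    μ = ν := by
  obtain ⟨m, hm⟩ := h
  obtain ⟨m', hm', hm'0⟩ : 0 ∈ {n : ℕ | ∃ m : E → ℕ, (ν - μ = ∑ α ∈ Ψ, m α • α) ∧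
      n = ∑ α ∈ Ψ, m α} := hd ▸ Nat.sInf_mem ⟨_, m, hm, rfl⟩
  have hm'_zero : ∀ α ∈ Ψ, m' α = 0 := Finset.sum_eq_zero_iff.1 hm'0.symm
  rw [Finset.sum_eq_zero fun α hα => by rw [hm'_zero α hα, zero_smul], sub_eq_zero] at hm'
  exact hm'.symm

lemma preceqPsi_refl (x : E × ℤ) : preceqPsi Ψ x x :=
  ⟨lePsi_refl x.1, by simp [dPsi_self]⟩

lemma preceqPsi_antisymm {x y : E × ℤ} (hxy : preceqPsi Ψ x y) (hyx : preceqPsi Ψ y x) :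
    x = y := by
  obtain ⟨hle, dxy⟩ := hxy
  have dyx := hyx.2
  exact Prod.ext (eq_of_lePsi_of_dPsi_eq_zero hle (by omega)) (by omega)

lemma preceq_of_sub_eq_sum_nsmul (hΨW : Ψ ⊆ W) {x y : E × ℤ} (m : E → ℕ)
    (hm : y.1 - x.1 = ∑ α ∈ Ψ, m α • α) (hd : y.2 - x.2 = ∑ α ∈ Ψ, m α) :
    preceq W x y := by
  obtain ⟨ξ, hξΨ, hξ⟩ := Ψ.exists_fin_sum_eq_sum_nsmul m
  rcases Nat.eq_zero_or_pos (∑ α ∈ Ψ, m α) with h0 | hpos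
  · have h1 : y.1 - x.1 = 0 := by
      have : IsEmpty (Fin (∑ α ∈ Ψ, m α)) := by rw [h0]; infer_instance
      rw [hm, ← hξ, Finset.univ_eq_empty, Finset.sum_empty]
    exact .inl (Prod.ext (sub_eq_zero.1 h1).symm (by omega))
  · have hn : (y.2 - x.2).toNat = ∑ α ∈ Ψ, m α := by omega
    refine .inr ⟨by omega, fun i => ξ (Fin.cast hn i), fun i => hΨW (hξΨ _), ?_⟩
    rw [hm, ← hξ]
    exact (Fintype.sum_equiv (finCongr hn) _ _ fun i => rfl).symm

namespace StarCond

variable (hΨW : Ψ ⊆ W) (hstar : StarCond W Ψ)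
include hΨW hstar

lemma sum_le_of_sum_nsmul_eq {m m' : E → ℕ}
    (h : ∑ α ∈ Ψ, m α • α = ∑ α ∈ Ψ, m' α • α) : ∑ α ∈ Ψ, m α ≤ ∑ α ∈ Ψ, m' α := by
  classical
  have hΨ : W ∩ Ψ = Ψ := Finset.inter_eq_right.2 hΨW
  have hr := hstar m (fun β => if β ∈ Ψ then m' β else 0)
  simp only [ite_smul, zero_smul, Finset.sum_ite_mem, hΨ] at hr
  exact (hr h).1

lemma sum_eq_of_sum_nsmul_eq {m m' : E → ℕ}
    (h : ∑ α ∈ Ψ, m α • α = ∑ α ∈ Ψ, m' α • α) : ∑ α ∈ Ψ, m α = ∑ α ∈ Ψ, m' α :=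
  (hstar.sum_le_of_sum_nsmul_eq hΨW h).antisymm (hstar.sum_le_of_sum_nsmul_eq hΨW h.symm)

lemma dPsi_eq {μ ν : E} (m : E → ℕ) (h : ν - μ = ∑ α ∈ Ψ, m α • α) :
    dPsi Ψ μ ν = ∑ α ∈ Ψ, m α := by
  refine le_antisymm (Nat.sInf_le ⟨m, h, rfl⟩) (le_csInf ⟨_, m, h, rfl⟩ ?_)
  rintro n ⟨m', h', rfl⟩
  exact (hstar.sum_eq_of_sum_nsmul_eq hΨW (h' ▸ h)).ge

lemma preceqPsi_trans {x y z : E × ℤ} (hxy : preceqPsi Ψ x y) (hyz : preceqPsi Ψ y z) :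
    preceqPsi Ψ x z := by
  obtain ⟨⟨m, hm⟩, dxy⟩ := hxy
  obtain ⟨⟨m', hm'⟩, dyz⟩ := hyz
  have hxz : z.1 - x.1 = ∑ α ∈ Ψ, (m α + m' α) • α := by
    simp only [add_smul, Finset.sum_add_distrib, ← hm, ← hm']
    abel
  refine ⟨⟨_, hxz⟩, ?_⟩
  rw [hstar.dPsi_eq hΨW m hm] at dxy
  rw [hstar.dPsi_eq hΨW m' hm'] at dyz
  rw [hstar.dPsi_eq hΨW _ hxz, Finset.sum_add_distrib, Nat.cast_add]
  omega

lemma preceq_of_preceqPsi {x y : E × ℤ} (h : preceqPsi Ψ x y) : preceq W x y := by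
  obtain ⟨⟨m, hm⟩, hd⟩ := h
  exact preceq_of_sub_eq_sum_nsmul hΨW m hm (hstar.dPsi_eq hΨW m hm ▸ hd.symm)

end StarCond

end

theorem preceqPsi_partialOrder_refines_general
    (E : Type*) [AddCommGroup E]
    (W Ψ : Finset E) (hΨW : Ψ ⊆ W)
    (hstar : StarCond W Ψ) :
    Reflexive (preceqPsi Ψ) ∧ Transitive (preceqPsi Ψ) ∧
    AntiSymmetric (preceqPsi Ψ) ∧
    (∀ x y : E × ℤ, preceqPsi Ψ x y → preceq W x y) :=
  ⟨preceqPsi_refl, fun _ _ _ => hstar.preceqPsi_trans hΨW,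
   fun _ _ => preceqPsi_antisymm, fun _ _ => hstar.preceq_of_preceqPsi hΨW⟩

theorem preceqPsi_partialOrder_refines
    (E : Type*) [AddCommGroup E] [Module ℂ E] [FiniteDimensional ℂ E]
    (W Ψ : Finset E) (hΨW : Ψ ⊆ W) (hne : Ψ.Nonempty)
    (hstar : StarCond W Ψ) :
    Reflexive (preceqPsi Ψ) ∧ Transitive (preceqPsi Ψ) ∧
    AntiSymmetric (preceqPsi Ψ) ∧
    (∀ x y : E × ℤ, preceqPsi Ψ x y → preceq W x y) :=
  preceqPsi_partialOrder_refines_general E W Ψ hΨW hstar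
end

section
/- (combinatorial core of Lemma 5.5(i)–(ii)) Suppose Ψ satisfies condition (⋆), and let μ, ν, ν' ∈ E with μ ≤_Ψ ν' and μ ≤_Ψ ν. If ν − ν' = ξ_1 + ⋯ + ξ_t where each ξ_i ∈ W and t = d_Ψ(μ,ν) − d_Ψ(μ,ν'), then every ξ_i belongs to Ψ; in particular ν' ≤_Ψ ν and d_Ψ(ν',ν) = t. -/
open Finset

/-!
Write `ν - μ = (ν' - μ) + (ν - ν')`. A Ψ-representation of `ν' - μ` of minimal length
`d_Ψ(μ,ν')`, followed by `ξ_1, …, ξ_t`, is a W-representation of `ν - μ` of length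
`d_Ψ(μ,ν') + t = d_Ψ(μ,ν)`. Comparing it with a minimal Ψ-representation of `ν - μ`, the
equality case of (⋆) forces every weight used, in particular every `ξ_i`, to lie in Ψ.
Then `ξ_1 + ⋯ + ξ_t` witnesses `ν' ≤_Ψ ν` with `d_Ψ(ν',ν) ≤ t`, and the triangle inequality
`d_Ψ(μ,ν) ≤ d_Ψ(μ,ν') + d_Ψ(ν',ν)` gives the reverse bound.
-/

section

variable {E : Type*} [AddCommGroup E] {W Ψ : Finset E} {μ ν ν' : E}

theorem dPsi_le_sum {m : E → ℕ} (h : ν - μ = ∑ α ∈ Ψ, m α • α) :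
    dPsi Ψ μ ν ≤ ∑ α ∈ Ψ, m α :=
  Nat.sInf_le ⟨m, h, rfl⟩

theorem lePsi.exists_sum_eq_dPsi (h : lePsi Ψ μ ν) :
    ∃ m : E → ℕ, ν - μ = ∑ α ∈ Ψ, m α • α ∧ ∑ α ∈ Ψ, m α = dPsi Ψ μ ν := by
  obtain ⟨m, hm⟩ := h
  obtain ⟨m', hrep, hlen⟩ := Nat.sInf_mem (⟨_, m, hm, rfl⟩ :
    {n : ℕ | ∃ m : E → ℕ, ν - μ = ∑ α ∈ Ψ, m α • α ∧ n = ∑ α ∈ Ψ, m α}.Nonempty)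
  exact ⟨m', hrep, hlen.symm⟩

theorem dPsi_le_add (h₁ : lePsi Ψ μ ν') (h₂ : lePsi Ψ ν' ν) :
    dPsi Ψ μ ν ≤ dPsi Ψ μ ν' + dPsi Ψ ν' ν := by
  obtain ⟨m₁, hrep₁, hlen₁⟩ := h₁.exists_sum_eq_dPsi
  obtain ⟨m₂, hrep₂, hlen₂⟩ := h₂.exists_sum_eq_dPsi
  have hrep : ν - μ = ∑ α ∈ Ψ, (m₁ α + m₂ α) • α := by
    simp only [add_smul, sum_add_distrib, ← hrep₁, ← hrep₂]
    abel
  calc dPsi Ψ μ ν ≤ ∑ α ∈ Ψ, (m₁ α + m₂ α) := dPsi_le_sum hrep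
    _ = dPsi Ψ μ ν' + dPsi Ψ ν' ν := by rw [sum_add_distrib, hlen₁, hlen₂]

theorem lePsi_of_sub_eq_multiset_sum {M : Multiset E} (hM : ∀ β ∈ M, β ∈ Ψ) (h : ν - ν' = M.sum) :
    lePsi Ψ ν' ν ∧ dPsi Ψ ν' ν ≤ M.card := by
  classical
  have hrep : ν - ν' = ∑ α ∈ Ψ, M.count α • α := by
    rw [h, sum_multiset_count_of_subset M Ψ fun β hβ => hM β (Multiset.mem_toFinset.mp hβ)]
  exact ⟨⟨_, hrep⟩, (dPsi_le_sum hrep).trans_eq (Multiset.sum_count_eq_card hM)⟩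

theorem StarCond.mem_of_sum_eq_dPsi (hstar : StarCond W Ψ) (hν : lePsi Ψ μ ν) {r : E → ℕ}
    (hrep : ν - μ = ∑ β ∈ W, r β • β) (hlen : ∑ β ∈ W, r β = dPsi Ψ μ ν)
    {β : E} (hβ : β ∈ W) (hpos : 0 < r β) : β ∈ Ψ := by
  obtain ⟨m, hmrep, hmlen⟩ := hν.exists_sum_eq_dPsi
  exact (hstar m r (hmrep ▸ hrep)).2 (hmlen.trans hlen.symm) β hβ hpos

theorem StarCond.mem_of_multiset_sum (hstar : StarCond W Ψ) (hΨW : Ψ ⊆ W)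
    (hν' : lePsi Ψ μ ν') (hν : lePsi Ψ μ ν) {M : Multiset E} (hMW : ∀ β ∈ M, β ∈ W)
    (hsum : ν - ν' = M.sum) (hlen : dPsi Ψ μ ν' + M.card = dPsi Ψ μ ν) :
    ∀ β ∈ M, β ∈ Ψ := by
  classical
  obtain ⟨m, hmrep, hmlen⟩ := hν'.exists_sum_eq_dPsi
  set r : E → ℕ := fun β => (if β ∈ Ψ then m β else 0) + M.count β
  have hW : M.toFinset ⊆ W := fun β hβ => hMW β (Multiset.mem_toFinset.mp hβ)
  have hrep : ν - μ = ∑ β ∈ W, r β • β := by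
    simp only [r, add_smul, ite_smul, zero_smul, sum_add_distrib, sum_ite_mem,
      inter_eq_right.mpr hΨW, ← sum_multiset_count_of_subset M W hW, ← hmrep, ← hsum]
    abel
  have hrlen : ∑ β ∈ W, r β = dPsi Ψ μ ν := by
    simp only [r, sum_add_distrib, sum_ite_mem, inter_eq_right.mpr hΨW, hmlen,
      Multiset.sum_count_eq_card hMW, hlen]
  intro β hβ
  exact hstar.mem_of_sum_eq_dPsi hν hrep hrlen (hMW β hβ)
    (Nat.add_pos_right _ (Multiset.count_pos.mpr hβ))

end

theorem lemma55_combinatorial_core_general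
    (E : Type*) [AddCommGroup E]
    (W Ψ : Finset E) (hΨW : Ψ ⊆ W)
    (hstar : StarCond W Ψ)
    (μ ν ν' : E) (hν' : lePsi Ψ μ ν') (hν : lePsi Ψ μ ν)
    (t : ℕ) (ξ : Fin t → E) (hξ : ∀ i, ξ i ∈ W)
    (hsum : ν - ν' = ∑ i, ξ i)
    (ht : (t : ℤ) = (dPsi Ψ μ ν : ℤ) - (dPsi Ψ μ ν' : ℤ)) :
    (∀ i, ξ i ∈ Ψ) ∧ lePsi Ψ ν' ν ∧ dPsi Ψ ν' ν = t := by
  set M : Multiset E := univ.val.map ξ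
  have hcard : M.card = t := by simp [M]
  have hMW : ∀ β ∈ M, β ∈ W := by simpa [M] using hξ
  have hMΨ : ∀ β ∈ M, β ∈ Ψ :=
    hstar.mem_of_multiset_sum hΨW hν' hν hMW hsum (by omega)
  obtain ⟨hle, hdle⟩ := lePsi_of_sub_eq_multiset_sum hMΨ hsum
  refine ⟨by simpa [M] using hMΨ, hle, le_antisymm (hcard ▸ hdle) ?_⟩
  have := dPsi_le_add hν' hle
  omega

theorem lemma55_combinatorial_core
    (E : Type*) [AddCommGroup E] [Module ℂ E] [FiniteDimensional ℂ E]
    (W Ψ : Finset E) (hΨW : Ψ ⊆ W) (hne : Ψ.Nonempty)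
    (hstar : StarCond W Ψ)
    (μ ν ν' : E) (hν' : lePsi Ψ μ ν') (hν : lePsi Ψ μ ν)
    (t : ℕ) (ξ : Fin t → E) (hξ : ∀ i, ξ i ∈ W)
    (hsum : ν - ν' = ∑ i, ξ i)
    (ht : (t : ℤ) = (dPsi Ψ μ ν : ℤ) - (dPsi Ψ μ ν' : ℤ)) :
    (∀ i, ξ i ∈ Ψ) ∧ lePsi Ψ ν' ν ∧ dPsi Ψ ν' ν = t :=
  lemma55_combinatorial_core_general E W Ψ hΨW hstar μ ν ν' hν' hν t ξ hξ hsum ht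
end

section
/- (finiteness of Ψ-intervals, used in the proof of Theorem 1.6) Suppose Ψ satisfies condition (⋆). Then for all μ ≤_Ψ ν in E, the interval [μ,ν]_Ψ := {η ∈ E : μ ≤_Ψ η ≤_Ψ ν} is a finite set. -/
open Finset

/-! If `η` lies in the interval, write `η - μ = ∑ a_α α` and `ν - η = ∑ b_α α`. Then `a + b`
represents `ν - μ`, so by (⋆), applied against a fixed representation `m` of `ν - μ`,
`∑ a_α ≤ ∑ m_α`. Hence `η` is `μ` plus one of the finitely many combinations of elements of `Ψ`
with total coefficient at most `∑ m_α`. -/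

theorem Set.finite_setOf_sum_nsmul_of_sum_le {M : Type*} [AddCommMonoid M] (s : Finset M)
    (N : ℕ) : {x : M | ∃ a : M → ℕ, ∑ v ∈ s, a v ≤ N ∧ x = ∑ v ∈ s, a v • v}.Finite := by
  refine (Set.finite_range fun f : s → Fin (N + 1) => ∑ v : s, (f v : ℕ) • (v : M)).subset ?_
  rintro x ⟨a, hsum, rfl⟩
  have ha : ∀ v ∈ s, a v < N + 1 := fun v hv =>
    Nat.lt_succ_of_le ((single_le_sum (fun _ _ => Nat.zero_le _) hv).trans hsum)
  exact ⟨fun v => ⟨a v, ha v v.2⟩, sum_coe_sort s fun v => a v • v⟩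

theorem StarCond.sum_le_of_sum_nsmul_eq_s12 {E : Type*} [AddCommGroup E] {W Ψ : Finset E}
    (hstar : StarCond W Ψ) (hΨW : Ψ ⊆ W) {m n : E → ℕ}
    (h : ∑ α ∈ Ψ, m α • α = ∑ α ∈ Ψ, n α • α) : ∑ α ∈ Ψ, m α ≤ ∑ α ∈ Ψ, n α := by
  classical
  have hWΨ : W ∩ Ψ = Ψ := inter_eq_right.mpr hΨW
  have htotal := (hstar m (fun β => if β ∈ Ψ then n β else 0) ?_).1
  · rwa [sum_ite_mem, hWΨ] at htotal
  · simp only [ite_smul, zero_smul]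
    rwa [sum_ite_mem, hWΨ]

theorem interval_Psi_finite_general
    (E : Type*) [AddCommGroup E]
    (W Ψ : Finset E) (hΨW : Ψ ⊆ W)
    (hstar : StarCond W Ψ)
    (μ ν : E) (hle : lePsi Ψ μ ν) :
    {η : E | lePsi Ψ μ η ∧ lePsi Ψ η ν}.Finite := by
  obtain ⟨m, hm⟩ := hle
  refine ((Set.finite_setOf_sum_nsmul_of_sum_le Ψ (∑ α ∈ Ψ, m α)).image (μ + ·)).subset ?_
  rintro η ⟨⟨a, ha⟩, ⟨b, hb⟩⟩
  have hab : ∑ α ∈ Ψ, (a α + b α) • α = ∑ α ∈ Ψ, m α • α := by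
    simp only [add_smul, sum_add_distrib, ← ha, ← hb, ← hm]
    abel
  have hbound : ∑ α ∈ Ψ, a α ≤ ∑ α ∈ Ψ, m α :=
    calc ∑ α ∈ Ψ, a α ≤ ∑ α ∈ Ψ, (a α + b α) := sum_le_sum fun _ _ => Nat.le_add_right _ _
      _ ≤ ∑ α ∈ Ψ, m α := hstar.sum_le_of_sum_nsmul_eq_s12 hΨW hab
  exact ⟨η - μ, ⟨a, hbound, ha⟩, add_sub_cancel μ η⟩

theorem interval_Psi_finite
    (E : Type*) [AddCommGroup E] [Module ℂ E] [FiniteDimensional ℂ E]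
    (W Ψ : Finset E) (hΨW : Ψ ⊆ W) (hne : Ψ.Nonempty)
    (hstar : StarCond W Ψ)
    (μ ν : E) (hle : lePsi Ψ μ ν) :
    {η : E | lePsi Ψ μ η ∧ lePsi Ψ η ν}.Finite :=
  interval_Psi_finite_general E W Ψ hΨW hstar μ ν hle
end
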